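/- Let ṽ : ℝ³ → ℝ² and θ : ℝ³ → ℝ be smooth and 1-periodic in the horizontal variables, and suppose ∫_{−h}^0 div_H ṽ(x_H,ζ) dζ = 0 for every x_H. Set w(ṽ)(x_H,x₃) = −∫_{−h}^{x₃} div_H ṽ(x_H,ζ) dζ and ũ = (ṽ, w(ṽ)) : ℝ³ → ℝ³. Then ∫_𝒪 [ ‖ṽ‖² θ (ũ·∇)θ + θ² ⟨ṽ, (ũ·∇)ṽ⟩ ] dx = 0, where ‖·‖ and ⟨·,·⟩ are the Euclidean norm and inner product on ℝ². -/

import Mathlib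

open MeasureTheory Real

noncomputable section

/-- Partial derivative of `f` in the `j`-th coordinate direction. -/
def pd (j : Fin 3) (f : (Fin 3 → ℝ) → ℝ) (x : Fin 3 → ℝ) : ℝ :=
  fderiv ℝ f x (Pi.single j 1)

/-- `f` is 1-periodic in the two horizontal variables. -/
def HorizPeriodic (f : (Fin 3 → ℝ) → ℝ) : Prop :=
  ∀ x : Fin 3 → ℝ, f (x + Pi.single 0 1) = f x ∧ f (x + Pi.single 1 1) = f x

/-- The fundamental domain `[0,1] × [0,1] × [-h,0]` of `𝒪 = 𝕋² × (-h,0)`. -/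
def Box (h : ℝ) : Set (Fin 3 → ℝ) := Set.Icc ![0, 0, -h] ![1, 1, 0]

/-- Horizontal divergence `div_H v = ∂₁ v¹ + ∂₂ v²`. -/
def divH (v : Fin 2 → (Fin 3 → ℝ) → ℝ) (x : Fin 3 → ℝ) : ℝ :=
  pd 0 (v 0) x + pd 1 (v 1) x

/-- Horizontal advection `(v · ∇_H) g = v¹ ∂₁ g + v² ∂₂ g`. -/
def advH (v : Fin 2 → (Fin 3 → ℝ) → ℝ) (g : (Fin 3 → ℝ) → ℝ) (x : Fin 3 → ℝ) : ℝ :=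
  v 0 x * pd 0 g x + v 1 x * pd 1 g x

/-- Advection `(u · ∇) g` by the full velocity field `u = (v, w)`. -/
def adv3 (v : Fin 2 → (Fin 3 → ℝ) → ℝ) (w g : (Fin 3 → ℝ) → ℝ) (x : Fin 3 → ℝ) : ℝ :=
  v 0 x * pd 0 g x + v 1 x * pd 1 g x + w x * pd 2 g x

/-- Vertical velocity `w(v)(x) = -∫_{-h}^{x₃} div_H v (x_H, ζ) dζ`. -/
def wv (h : ℝ) (v : Fin 2 → (Fin 3 → ℝ) → ℝ) (x : Fin 3 → ℝ) : ℝ :=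
  -(∫ ζ in (-h)..(x 2), divH v (Function.update x 2 ζ))

/-- Vertical primitive `Θ(x) = ∫_{-h}^{x₃} θ(x_H, ζ) dζ`. -/
def vint (h : ℝ) (θ : (Fin 3 → ℝ) → ℝ) (x : Fin 3 → ℝ) : ℝ :=
  ∫ ζ in (-h)..(x 2), θ (Function.update x 2 ζ)


/-!
The integrand is `½ (ũ·∇) F` with `F = ‖ṽ‖² θ²`. Since `∂₃ w(ṽ) = -div_H ṽ`, the field `ũ` is
divergence free and `(ũ·∇) F = ∂₁(ṽ¹F) + ∂₂(ṽ²F) + ∂₃(w(ṽ) F)`. Integrating each term along its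
own coordinate direction, the horizontal ones vanish by periodicity, and the vertical one because
`w(ṽ)` vanishes at `x₃ = -h` trivially and at `x₃ = 0` by the hypothesis on `ṽ`.
-/

open Function

section LineIntegrals

variable {n : ℕ}

lemma setIntegral_Icc_eq_zero_of_forall_line {a b : Fin (n + 1) → ℝ}
    {f : (Fin (n + 1) → ℝ) → ℝ} (hf : Continuous f) (j : Fin (n + 1))
    (hline : ∀ x, ∫ t in Set.Icc (a j) (b j), f (update x j t) = 0) :
    ∫ x in Set.Icc a b, f x = 0 := by
  set e : ℝ × (Fin n → ℝ) ≃ᵐ (Fin (n + 1) → ℝ) :=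
    (MeasurableEquiv.piFinSuccAbove (fun _ => ℝ) j).symm
  have he : MeasurePreserving e := (volume_preserving_piFinSuccAbove (fun _ => ℝ) j).symm _
  have hpre : e ⁻¹' Set.Icc a b
      = Set.Icc (a j) (b j) ×ˢ Set.Icc (a ∘ j.succAbove) (b ∘ j.succAbove) :=
    ((Fin.insertNthOrderIso (fun _ => ℝ) j).preimage_Icc a b).trans (Set.Icc_prod_eq _ _)
  have he_apply : ∀ p, e p = j.insertNth p.1 p.2 := fun _ => rfl
  have hfe : Continuous fun p : (Fin n → ℝ) × ℝ => f (e p.swap) :=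
    hf.comp (continuous_snd.finInsertNth (A := fun _ => ℝ) j continuous_fst :)
  rw [← he.map_eq, setIntegral_map_equiv, hpre, Measure.volume_eq_prod, ← setIntegral_prod_swap,
    setIntegral_prod _ (hfe.continuousOn.integrableOn_compact (isCompact_Icc.prod isCompact_Icc))]
  refine (setIntegral_congr_fun measurableSet_Icc fun y _ => ?_).trans (integral_zero _ _)
  simpa [he_apply] using hline (j.insertNth 0 y)

lemma setIntegral_Icc_eq_zero_of_hasDerivAt {g g' : ℝ → ℝ} {a b : ℝ}
    (hg : ∀ t, HasDerivAt g (g' t) t) (hg' : Continuous g') (hab : g a = g b) :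
    ∫ t in Set.Icc a b, g' t = 0 := by
  rcases le_or_gt a b with hle | hlt
  · rw [integral_Icc_eq_integral_Ioc, ← intervalIntegral.integral_of_le hle,
      intervalIntegral.integral_eq_sub_of_hasDerivAt (fun t _ => hg t) (hg'.intervalIntegrable a b),
      hab, sub_self]
  · simp [Set.Icc_eq_empty_of_lt hlt]

lemma setIntegral_Icc_eq_zero_of_hasDerivAt_update {a b : Fin (n + 1) → ℝ}
    {f g : (Fin (n + 1) → ℝ) → ℝ} (hf : Continuous f) (j : Fin (n + 1))
    (hg : ∀ x t, HasDerivAt (fun s => g (update x j s)) (f (update x j t)) t)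
    (hab : ∀ x, g (update x j (a j)) = g (update x j (b j))) :
    ∫ x in Set.Icc a b, f x = 0 :=
  setIntegral_Icc_eq_zero_of_forall_line hf j fun x =>
    setIntegral_Icc_eq_zero_of_hasDerivAt (hg x) (hf.comp (continuous_const.update j continuous_id))
      (hab x)

end LineIntegrals

section PartialDerivatives

variable {f g : (Fin 3 → ℝ) → ℝ} {x : Fin 3 → ℝ}

lemma hasDerivAt_update_pd (hg : Differentiable ℝ g) (x : Fin 3 → ℝ) (j : Fin 3) (t : ℝ) :
    HasDerivAt (fun s => g (update x j s)) (pd j g (update x j t)) t :=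
  (hg _).hasFDerivAt.comp_hasDerivAt t (hasDerivAt_update x j t)

lemma continuous_pd (hg : ContDiff ℝ 1 g) (j : Fin 3) : Continuous (pd j g) :=
  (hg.continuous_fderiv one_ne_zero).clm_apply continuous_const

lemma pd_add (j : Fin 3) (hf : DifferentiableAt ℝ f x) (hg : DifferentiableAt ℝ g x) :
    pd j (fun y => f y + g y) x = pd j f x + pd j g x := by
  simp [pd, fderiv_fun_add hf hg]

lemma pd_mul (j : Fin 3) (hf : DifferentiableAt ℝ f x) (hg : DifferentiableAt ℝ g x) :
    pd j (fun y => f y * g y) x = f x * pd j g x + g x * pd j f x := by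
  simp [pd, fderiv_fun_mul hf hg]

lemma setIntegral_Icc_pd_eq_zero {a b : Fin 3 → ℝ} (hg : ContDiff ℝ 1 g) (j : Fin 3)
    (hab : ∀ x, g (update x j (a j)) = g (update x j (b j))) :
    ∫ x in Set.Icc a b, pd j g x = 0 :=
  setIntegral_Icc_eq_zero_of_hasDerivAt_update (continuous_pd hg j) j
    (fun x t => hasDerivAt_update_pd (hg.differentiable one_ne_zero) x j t) hab

lemma HorizPeriodic.add (hf : HorizPeriodic f) (hg : HorizPeriodic g) :
    HorizPeriodic fun x => f x + g x := fun x => by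
  simp only [(hf x).1, (hf x).2, (hg x).1, (hg x).2, and_self]

lemma HorizPeriodic.mul (hf : HorizPeriodic f) (hg : HorizPeriodic g) :
    HorizPeriodic fun x => f x * g x := fun x => by
  simp only [(hf x).1, (hf x).2, (hg x).1, (hg x).2, and_self]

lemma HorizPeriodic.pow (hf : HorizPeriodic f) (k : ℕ) : HorizPeriodic fun x => f x ^ k :=
  fun x => by simp only [(hf x).1, (hf x).2, and_self]

lemma HorizPeriodic.update_zero_eq_update_one (hg : HorizPeriodic g) (x : Fin 3 → ℝ)
    {j : Fin 3} (hj : j = 0 ∨ j = 1) : g (update x j 0) = g (update x j 1) := by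
  have hshift : update x j 1 = update x j 0 + Pi.single j 1 := by
    ext i
    rcases eq_or_ne i j with rfl | hij
    · simp
    · simp [hij]
  rcases hj with rfl | rfl
  · rw [hshift, (hg _).1]
  · rw [hshift, (hg _).2]

lemma setIntegral_Box_pd_eq_zero_of_horizPeriodic (h : ℝ) (hg : ContDiff ℝ 1 g)
    (hper : HorizPeriodic g) {j : Fin 3} (hj : j = 0 ∨ j = 1) :
    ∫ x in Box h, pd j g x = 0 := by
  refine setIntegral_Icc_pd_eq_zero hg j fun x => ?_
  rcases hj with rfl | rfl <;> exact hper.update_zero_eq_update_one x (by simp)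

end PartialDerivatives

section Advection

variable {v : Fin 2 → (Fin 3 → ℝ) → ℝ} {w f g : (Fin 3 → ℝ) → ℝ} {x : Fin 3 → ℝ}

lemma adv3_add (hf : DifferentiableAt ℝ f x) (hg : DifferentiableAt ℝ g x) :
    adv3 v w (fun y => f y + g y) x = adv3 v w f x + adv3 v w g x := by
  simp only [adv3, pd_add _ hf hg]
  ring

lemma adv3_mul (hf : DifferentiableAt ℝ f x) (hg : DifferentiableAt ℝ g x) :
    adv3 v w (fun y => f y * g y) x = f x * adv3 v w g x + g x * adv3 v w f x := by
  simp only [adv3, pd_mul _ hf hg]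
  ring

lemma adv3_pow_two (hf : DifferentiableAt ℝ f x) :
    adv3 v w (fun y => f y ^ 2) x = 2 * f x * adv3 v w f x := by
  simp only [sq, adv3_mul hf hf]
  ring

lemma adv3_eq_pd_mul_add (hv : ∀ i, DifferentiableAt ℝ (v i) x) (hf : DifferentiableAt ℝ f x) :
    adv3 v w f x = pd 0 (fun y => v 0 y * f y) x + pd 1 (fun y => v 1 y * f y) x
      + (w x * pd 2 f x - divH v x * f x) := by
  simp only [adv3, divH, pd_mul _ (hv _) hf]
  ring

lemma adv3_normSq_mul_sq {θ : (Fin 3 → ℝ) → ℝ} (hv : ∀ i, DifferentiableAt ℝ (v i) x)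
    (hθ : DifferentiableAt ℝ θ x) :
    adv3 v w (fun y => (v 0 y ^ 2 + v 1 y ^ 2) * θ y ^ 2) x
      = 2 * ((∑ i, v i x ^ 2) * θ x * adv3 v w θ x
        + θ x ^ 2 * ∑ i, v i x * adv3 v w (v i) x) := by
  have hsq : ∀ i, DifferentiableAt ℝ (fun y => v i y ^ 2) x := fun i => (hv i).pow 2
  rw [adv3_mul (f := fun y => v 0 y ^ 2 + v 1 y ^ 2) (g := fun y => θ y ^ 2)
      ((hsq 0).add (hsq 1)) (hθ.pow 2),
    adv3_add (f := fun y => v 0 y ^ 2) (g := fun y => v 1 y ^ 2) (hsq 0) (hsq 1),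
    adv3_pow_two (hv 0), adv3_pow_two (hv 1), adv3_pow_two hθ, Fin.sum_univ_two, Fin.sum_univ_two]
  ring

end Advection

section VerticalVelocity

variable {h : ℝ} {v : Fin 2 → (Fin 3 → ℝ) → ℝ}

lemma continuous_wv (hdiv : Continuous (divH v)) : Continuous (wv h v) :=
  (intervalIntegral.continuous_parametric_intervalIntegral_of_continuous
    (f := fun x ζ => divH v (update x 2 ζ)) (hdiv.comp (continuous_update 2))
    (continuous_apply 2)).neg

lemma hasDerivAt_wv_update (hdiv : Continuous (divH v)) (x : Fin 3 → ℝ) (t : ℝ) :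
    HasDerivAt (fun s => wv h v (update x 2 s)) (-divH v (update x 2 t)) t := by
  have hline : Continuous fun ζ => divH v (update x 2 ζ) :=
    hdiv.comp (continuous_const.update 2 continuous_id)
  simp only [wv, update_self, update_idem]
  exact (intervalIntegral.integral_hasDerivAt_right (hline.intervalIntegrable _ _)
    (hline.stronglyMeasurableAtFilter _ _) hline.continuousAt).neg

lemma setIntegral_Box_vertical_flux_eq_zero {F : (Fin 3 → ℝ) → ℝ}
    (hdiv : Continuous (divH v)) (hF : ContDiff ℝ 1 F)
    (hw : ∀ x, (∫ ζ in (-h)..(0:ℝ), divH v (update x 2 ζ)) = 0) :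
    ∫ x in Box h, (wv h v x * pd 2 F x - divH v x * F x) = 0 := by
  -- `wv h v` is only known to be differentiable along vertical lines, hence no `pd 2 (wv h v * F)`.
  refine setIntegral_Icc_eq_zero_of_hasDerivAt_update (g := fun x => wv h v x * F x)
    (((continuous_wv hdiv).mul (continuous_pd hF 2)).sub (hdiv.mul hF.continuous)) 2
    (fun x t => ?_) (fun x => ?_)
  · exact ((hasDerivAt_wv_update hdiv x t).fun_mul
      (hasDerivAt_update_pd (hF.differentiable one_ne_zero) x 2 t)).congr_deriv (by ring)
  · simp [wv, update_idem, hw x]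

lemma setIntegral_Box_adv3_wv_eq_zero {F : (Fin 3 → ℝ) → ℝ} (hv : ∀ i, ContDiff ℝ 1 (v i))
    (hv_per : ∀ i, HorizPeriodic (v i)) (hF : ContDiff ℝ 1 F) (hF_per : HorizPeriodic F)
    (hw : ∀ x, (∫ ζ in (-h)..(0:ℝ), divH v (update x 2 ζ)) = 0) :
    ∫ x in Box h, adv3 v (wv h v) F x = 0 := by
  have hG : ∀ i, ContDiff ℝ 1 fun y => v i y * F y := fun i => (hv i).mul hF
  have hdiv : Continuous (divH v) := (continuous_pd (hv 0) 0).add (continuous_pd (hv 1) 1)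
  have hint : ∀ {f : (Fin 3 → ℝ) → ℝ}, Continuous f → IntegrableOn f (Box h) :=
    fun hf => hf.integrableOn_Icc
  have hvert : Continuous fun x => wv h v x * pd 2 F x - divH v x * F x :=
    ((continuous_wv hdiv).mul (continuous_pd hF 2)).sub (hdiv.mul hF.continuous)
  simp_rw [adv3_eq_pd_mul_add (fun i => (hv i).differentiable one_ne_zero _)
    (hF.differentiable one_ne_zero _)]
  rw [integral_add (f := fun x => pd 0 (fun y => v 0 y * F y) x + pd 1 (fun y => v 1 y * F y) x)
      (hint ((continuous_pd (hG 0) 0).add (continuous_pd (hG 1) 1))) (hint hvert),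
    integral_add (hint (continuous_pd (hG 0) 0)) (hint (continuous_pd (hG 1) 1)),
    setIntegral_Box_pd_eq_zero_of_horizPeriodic h (hG 0) ((hv_per 0).mul hF_per) (by simp),
    setIntegral_Box_pd_eq_zero_of_horizPeriodic h (hG 1) ((hv_per 1).mul hF_per) (by simp),
    setIntegral_Box_vertical_flux_eq_zero hdiv hF hw, add_zero, add_zero]

end VerticalVelocity

theorem statement11_general
    (h : ℝ)
    (vt : Fin 2 → (Fin 3 → ℝ) → ℝ)
    (hvt_smooth : ∀ i, ContDiff ℝ (⊤ : ℕ∞) (vt i))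
    (hvt_per : ∀ i, HorizPeriodic (vt i))
    (θ : (Fin 3 → ℝ) → ℝ)
    (hθ_smooth : ContDiff ℝ (⊤ : ℕ∞) θ) (hθ_per : HorizPeriodic θ)
    (hdiv : ∀ x : Fin 3 → ℝ, (∫ ζ in (-h)..(0:ℝ), divH vt (Function.update x 2 ζ)) = 0) :
    (∫ x in Box h,
        ((∑ i, vt i x ^ 2) * θ x * adv3 vt (wv h vt) θ x
          + θ x ^ 2 * (∑ i, vt i x * adv3 vt (wv h vt) (vt i) x))) = 0 := by
  have hv : ∀ i, ContDiff ℝ 1 (vt i) := fun i => (hvt_smooth i).of_le (by simp)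
  have hθ : ContDiff ℝ 1 θ := hθ_smooth.of_le (by simp)
  let F : (Fin 3 → ℝ) → ℝ := fun y => (vt 0 y ^ 2 + vt 1 y ^ 2) * θ y ^ 2
  have hF : ContDiff ℝ 1 F := (((hv 0).pow 2).add ((hv 1).pow 2)).mul (hθ.pow 2)
  have hFper : HorizPeriodic F :=
    (((hvt_per 0).pow 2).add ((hvt_per 1).pow 2)).mul (hθ_per.pow 2)
  have hpointwise : ∀ x, (∑ i, vt i x ^ 2) * θ x * adv3 vt (wv h vt) θ x
      + θ x ^ 2 * (∑ i, vt i x * adv3 vt (wv h vt) (vt i) x) = adv3 vt (wv h vt) F x / 2 :=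
    fun x => by
      rw [adv3_normSq_mul_sq (fun i => (hv i).differentiable one_ne_zero x)
        (hθ.differentiable one_ne_zero x)]
      ring
  rw [integral_congr_ae (ae_of_all _ hpointwise), integral_div,
    setIntegral_Box_adv3_wv_eq_zero hv hvt_per hF hFper hdiv, zero_div]

/-- cancellation of the baroclinic transport terms in the
`⟨ṽ, θ⟩`-estimate. -/
theorem statement11
    (h : ℝ) (hh : 0 < h)
    (vt : Fin 2 → (Fin 3 → ℝ) → ℝ)
    (hvt_smooth : ∀ i, ContDiff ℝ (⊤ : ℕ∞) (vt i))
    (hvt_per : ∀ i, HorizPeriodic (vt i))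
    (θ : (Fin 3 → ℝ) → ℝ)
    (hθ_smooth : ContDiff ℝ (⊤ : ℕ∞) θ) (hθ_per : HorizPeriodic θ)
    (hdiv : ∀ x : Fin 3 → ℝ, (∫ ζ in (-h)..(0:ℝ), divH vt (Function.update x 2 ζ)) = 0) :
    (∫ x in Box h,
        ((∑ i, vt i x ^ 2) * θ x * adv3 vt (wv h vt) θ x
          + θ x ^ 2 * (∑ i, vt i x * adv3 vt (wv h vt) (vt i) x))) = 0 :=
  statement11_general h vt hvt_smooth hvt_per θ hθ_smooth hθ_per hdiv
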